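/- For every real ρ with 0 < ρ < 1 and every natural number D, (1-ρ)^2 · ∑_{ℓ=1}^{∞} ρ^ℓ · (ℓ - ⌊ℓ/(D+2)⌋) = ρ - (1-ρ)·ρ^{D+2}/(1 - ρ^{D+2}). -/

import Mathlib

/-!
With `d = D + 2`, the sum splits as `∑ n ρ ^ n - ∑ ρ ^ n ⌊n / d⌋`. The first part is
`ρ / (1 - ρ) ^ 2`. The floor part `S` vanishes on its first `d` terms, and `⌊(n + d) / d⌋ = ⌊n / d⌋ + 1`,
so shifting the index by `d` gives `S = ρ ^ d (S + 1 / (1 - ρ))`, i.e. `S = ρ ^ d / ((1 - ρ) (1 - ρ ^ d))`.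
-/

section

variable {𝕜 : Type*} [NormedField 𝕜] [CompleteSpace 𝕜] {r : 𝕜}

theorem summable_pow_mul_natDiv (hr : ‖r‖ < 1) (d : ℕ) :
    Summable fun n : ℕ ↦ r ^ n * ((n / d : ℕ) : 𝕜) := by
  have hr' : ‖‖r‖‖ < 1 := by rwa [norm_norm]
  refine Summable.of_norm_bounded (by simpa using summable_pow_mul_geometric_of_norm_lt_one 1 hr')
    fun n ↦ ?_
  rw [norm_mul, norm_pow, mul_comm]
  gcongr
  exact (Nat.norm_cast_le _).trans (by rw [norm_one, mul_one]; exact_mod_cast Nat.div_le_self n d)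

theorem tsum_pow_mul_natDiv (hr : ‖r‖ < 1) {d : ℕ} (hd : 0 < d) :
    ∑' n : ℕ, r ^ n * ((n / d : ℕ) : 𝕜) = r ^ d / ((1 - r) * (1 - r ^ d)) := by
  set S := ∑' n : ℕ, r ^ n * ((n / d : ℕ) : 𝕜)
  have hS := summable_pow_mul_natDiv hr d
  have hrd : 1 - r ^ d ≠ 0 := sub_ne_zero.2 fun h ↦ by
    have := congrArg norm h
    rw [norm_pow, norm_one] at this
    exact (pow_lt_one₀ (norm_nonneg r) hr hd.ne').ne this.symm
  have hr1 : 1 - r ≠ 0 := sub_ne_zero.2 fun h ↦ by simp [← h] at hr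
  have hshift : S = r ^ d * (S + (1 - r)⁻¹) := calc
    S = ∑ n ∈ Finset.range d, r ^ n * ((n / d : ℕ) : 𝕜)
          + ∑' n : ℕ, r ^ (n + d) * (((n + d) / d : ℕ) : 𝕜) := (hS.sum_add_tsum_nat_add d).symm
    _ = ∑' n : ℕ, r ^ d * (r ^ n * ((n / d : ℕ) : 𝕜) + r ^ n) := by
      rw [Finset.sum_eq_zero fun n hn ↦ by simp [Nat.div_eq_of_lt (Finset.mem_range.1 hn)], zero_add]
      congr 1 with n
      rw [Nat.add_div_right n hd]
      push_cast
      ring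
    _ = r ^ d * (S + (1 - r)⁻¹) := by
      rw [tsum_mul_left, hS.tsum_add (summable_geometric_of_norm_lt_one hr),
        tsum_geometric_of_norm_lt_one hr]
  rw [eq_div_iff (mul_ne_zero hr1 hrd)]
  field_simp at hshift
  linear_combination hshift

theorem tsum_pow_mul_sub_natDiv (hr : ‖r‖ < 1) {d : ℕ} (hd : 0 < d) :
    ∑' n : ℕ, r ^ n * ((n : 𝕜) - (n / d : ℕ)) = r / (1 - r) ^ 2 - r ^ d / ((1 - r) * (1 - r ^ d)) := by
  have hN : HasSum (fun n : ℕ ↦ r ^ n * n) (r / (1 - r) ^ 2) := by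
    simpa only [mul_comm] using hasSum_coe_mul_geometric_of_norm_lt_one hr
  rw [← hN.tsum_eq, ← tsum_pow_mul_natDiv hr hd,
    ← hN.summable.tsum_sub (summable_pow_mul_natDiv hr d)]
  exact tsum_congr fun n ↦ mul_sub _ _ _

end

theorem slow_mg_scheme2 (ρ : ℝ) (hρ0 : 0 < ρ) (hρ1 : ρ < 1) (D : ℕ) :
    (1 - ρ) ^ 2 * ∑' ℓ : ℕ, ρ ^ ℓ * ((ℓ : ℝ) - (ℓ / (D + 2) : ℕ))
      = ρ - (1 - ρ) * ρ ^ (D + 2) / (1 - ρ ^ (D + 2)) := by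
  have hρ : ‖ρ‖ < 1 := by rwa [Real.norm_of_nonneg hρ0.le]
  have h1 : 1 - ρ ≠ 0 := by linarith
  have h2 : 1 - ρ ^ (D + 2) ≠ 0 := by linarith [pow_lt_one₀ hρ0.le hρ1 (by omega : D + 2 ≠ 0)]
  rw [tsum_pow_mul_sub_natDiv hρ (by omega)]
  field_simp
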